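/- arXiv:2310.18931 — 3 statements merged into one kernel-verified Lean document; each statement's English description precedes it below -/
import Mathlib

section
/- In ℝ^11 with standard basis e_1, ..., e_11, consider the 17 vectors v_1 = e_4, v_2 = e_5 - e_4, v_3 = e_4 - e_5, v_4 = e_8 - e_1 - e_4, v_5 = e_1 + e_4 - e_8, v_6 = e_9 - e_5 - e_3, v_7 = e_5 + e_3 - e_9, v_8 = e_7 - e_6 - e_5, v_9 = e_6 + e_5 - e_7, v_10 = e_1 + e_10 - e_8, v_11 = e_3 + e_11 - e_9, v_12 = -e_10, v_13 = -e_11, v_14 = e_2 - e_1, v_15 = e_1 - e_2, v_16 = e_3 - e_1, v_17 = e_1 - e_3. Then: (i) the span of all 17 vectors has dimension 9; (ii) the span of {v_1,...,v_7, v_10,...,v_13} has dimension 6; (iii) each of the spans of {v_8, v_9}, {v_14, v_15}, {v_16, v_17} has dimension 1; hence 9 = 6 + 1 + 1 + 1, so the partition into these four reaction sets is an independent decomposition. -/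
/-- standard basis vector of `ℝ^11` (species `A_(i+1)`). -/
noncomputable def eS (i : Fin 11) : Fin 11 → ℝ := Pi.single i 1

/-- the 17 reaction vectors of the Schmitz network `N_S` (0-indexed: `vS (i-1)` is `v_i`). -/
noncomputable def vS : Fin 17 → (Fin 11 → ℝ) :=
  ![eS 3, eS 4 - eS 3, eS 3 - eS 4, eS 7 - eS 0 - eS 3, eS 0 + eS 3 - eS 7,
    eS 8 - eS 4 - eS 2, eS 4 + eS 2 - eS 8, eS 6 - eS 5 - eS 4, eS 5 + eS 4 - eS 6,
    eS 0 + eS 9 - eS 7, eS 2 + eS 10 - eS 8, -eS 9, -eS 10,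
    eS 1 - eS 0, eS 0 - eS 1, eS 2 - eS 0, eS 0 - eS 2]

/-- a basis for the span of all 17 reaction vectors. -/
noncomputable def bS9 : Fin 9 → (Fin 11 → ℝ) :=
  ![eS 3, eS 4, eS 9, eS 10, eS 7 - eS 0, eS 8 - eS 2, eS 6 - eS 5, eS 1 - eS 0, eS 2 - eS 0]

/-- a basis for the span of the first subnetwork's reaction vectors. -/
noncomputable def bS6 : Fin 6 → (Fin 11 → ℝ) :=
  ![eS 3, eS 4, eS 9, eS 10, eS 7 - eS 0, eS 8 - eS 2]

lemma bS9_li : LinearIndependent ℝ bS9 := by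
  rw [Fintype.linearIndependent_iff]
  intro g h
  have h0 : g 0 = 0 := by simpa [bS9, eS, Fin.sum_univ_succ, Pi.single_apply] using congrFun h 3
  have h1 : g 1 = 0 := by simpa [bS9, eS, Fin.sum_univ_succ, Pi.single_apply] using congrFun h 4
  have h2 : g 2 = 0 := by simpa [bS9, eS, Fin.sum_univ_succ, Pi.single_apply] using congrFun h 9
  have h3 : g 3 = 0 := by simpa [bS9, eS, Fin.sum_univ_succ, Pi.single_apply] using congrFun h 10
  have h4 : g 4 = 0 := by simpa [bS9, eS, Fin.sum_univ_succ, Pi.single_apply] using congrFun h 7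
  have h5 : g 5 = 0 := by simpa [bS9, eS, Fin.sum_univ_succ, Pi.single_apply] using congrFun h 8
  have h6 : g 6 = 0 := by simpa [bS9, eS, Fin.sum_univ_succ, Pi.single_apply] using congrFun h 6
  have h7 : g 7 = 0 := by simpa [bS9, eS, Fin.sum_univ_succ, Pi.single_apply] using congrFun h 1
  have h8 : g 8 = 0 := by
    have h8' : -g 5 + g 8 = 0 := by
      simpa [bS9, eS, Fin.sum_univ_succ, Pi.single_apply] using congrFun h 2
    linarith
  intro i; fin_cases i <;> assumption

lemma bS6_li : LinearIndependent ℝ bS6 := by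
  rw [Fintype.linearIndependent_iff]
  intro g h
  have h0 : g 0 = 0 := by simpa [bS6, eS, Fin.sum_univ_succ, Pi.single_apply] using congrFun h 3
  have h1 : g 1 = 0 := by simpa [bS6, eS, Fin.sum_univ_succ, Pi.single_apply] using congrFun h 4
  have h2 : g 2 = 0 := by simpa [bS6, eS, Fin.sum_univ_succ, Pi.single_apply] using congrFun h 9
  have h3 : g 3 = 0 := by simpa [bS6, eS, Fin.sum_univ_succ, Pi.single_apply] using congrFun h 10
  have h4 : g 4 = 0 := by simpa [bS6, eS, Fin.sum_univ_succ, Pi.single_apply] using congrFun h 7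
  have h5 : g 5 = 0 := by simpa [bS6, eS, Fin.sum_univ_succ, Pi.single_apply] using congrFun h 8
  intro i; fin_cases i <;> assumption

lemma span_all_eq : Submodule.span ℝ (Set.range vS) = Submodule.span ℝ (Set.range bS9) := by
  apply le_antisymm
  · rw [Submodule.span_le]
    rintro x ⟨i, rfl⟩
    have hb : ∀ j, bS9 j ∈ Submodule.span ℝ (Set.range bS9) :=
      fun j => Submodule.subset_span ⟨j, rfl⟩
    fin_cases i
    · exact hb 0
    · exact sub_mem (hb 1) (hb 0)
    · exact sub_mem (hb 0) (hb 1)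
    · exact sub_mem (hb 4) (hb 0)
    · have e : vS 4 = bS9 0 - bS9 4 := by
        show eS 0 + eS 3 - eS 7 = eS 3 - (eS 7 - eS 0); abel
      exact Set.mem_of_eq_of_mem e (sub_mem (hb 0) (hb 4))
    · have e : vS 5 = bS9 5 - bS9 1 := by
        show eS 8 - eS 4 - eS 2 = (eS 8 - eS 2) - eS 4; abel
      exact Set.mem_of_eq_of_mem e (sub_mem (hb 5) (hb 1))
    · have e : vS 6 = bS9 1 - bS9 5 := by
        show eS 4 + eS 2 - eS 8 = eS 4 - (eS 8 - eS 2); abel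
      exact Set.mem_of_eq_of_mem e (sub_mem (hb 1) (hb 5))
    · exact sub_mem (hb 6) (hb 1)
    · have e : vS 8 = bS9 1 - bS9 6 := by
        show eS 5 + eS 4 - eS 6 = eS 4 - (eS 6 - eS 5); abel
      exact Set.mem_of_eq_of_mem e (sub_mem (hb 1) (hb 6))
    · have e : vS 9 = bS9 2 - bS9 4 := by
        show eS 0 + eS 9 - eS 7 = eS 9 - (eS 7 - eS 0); abel
      exact Set.mem_of_eq_of_mem e (sub_mem (hb 2) (hb 4))
    · have e : vS 10 = bS9 3 - bS9 5 := by
        show eS 2 + eS 10 - eS 8 = eS 10 - (eS 8 - eS 2); abel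
      exact Set.mem_of_eq_of_mem e (sub_mem (hb 3) (hb 5))
    · exact neg_mem (hb 2)
    · exact neg_mem (hb 3)
    · exact hb 7
    · have e : vS 14 = -bS9 7 := by show eS 0 - eS 1 = -(eS 1 - eS 0); abel
      exact Set.mem_of_eq_of_mem e (neg_mem (hb 7))
    · exact hb 8
    · have e : vS 16 = -bS9 8 := by show eS 0 - eS 2 = -(eS 2 - eS 0); abel
      exact Set.mem_of_eq_of_mem e (neg_mem (hb 8))
  · rw [Submodule.span_le]
    rintro x ⟨j, rfl⟩
    have hv : ∀ i, vS i ∈ Submodule.span ℝ (Set.range vS) :=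
      fun i => Submodule.subset_span ⟨i, rfl⟩
    fin_cases j
    · exact hv 0
    · have e : bS9 1 = vS 0 + vS 1 := by show eS 4 = eS 3 + (eS 4 - eS 3); abel
      exact Set.mem_of_eq_of_mem e (add_mem (hv 0) (hv 1))
    · have e : bS9 2 = -vS 11 := by show eS 9 = -(-eS 9); abel
      exact Set.mem_of_eq_of_mem e (neg_mem (hv 11))
    · have e : bS9 3 = -vS 12 := by show eS 10 = -(-eS 10); abel
      exact Set.mem_of_eq_of_mem e (neg_mem (hv 12))
    · have e : bS9 4 = vS 0 + vS 3 := by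
        show eS 7 - eS 0 = eS 3 + (eS 7 - eS 0 - eS 3); abel
      exact Set.mem_of_eq_of_mem e (add_mem (hv 0) (hv 3))
    · have e : bS9 5 = vS 0 + vS 1 + vS 5 := by
        show eS 8 - eS 2 = eS 3 + (eS 4 - eS 3) + (eS 8 - eS 4 - eS 2); abel
      exact Set.mem_of_eq_of_mem e (add_mem (add_mem (hv 0) (hv 1)) (hv 5))
    · have e : bS9 6 = vS 0 + vS 1 + vS 7 := by
        show eS 6 - eS 5 = eS 3 + (eS 4 - eS 3) + (eS 6 - eS 5 - eS 4); abel
      exact Set.mem_of_eq_of_mem e (add_mem (add_mem (hv 0) (hv 1)) (hv 7))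
    · exact hv 13
    · exact hv 15

lemma span_sub1_eq : Submodule.span ℝ
    ({vS 0, vS 1, vS 2, vS 3, vS 4, vS 5, vS 6, vS 9, vS 10, vS 11, vS 12} :
      Set (Fin 11 → ℝ)) = Submodule.span ℝ (Set.range bS6) := by
  apply le_antisymm
  · rw [Submodule.span_le]
    intro x hx
    have hb : ∀ j, bS6 j ∈ Submodule.span ℝ (Set.range bS6) :=
      fun j => Submodule.subset_span ⟨j, rfl⟩
    simp only [Set.mem_insert_iff, Set.mem_singleton_iff] at hx
    rcases hx with rfl|rfl|rfl|rfl|rfl|rfl|rfl|rfl|rfl|rfl|rfl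
    · exact hb 0
    · exact sub_mem (hb 1) (hb 0)
    · exact sub_mem (hb 0) (hb 1)
    · exact sub_mem (hb 4) (hb 0)
    · have e : vS 4 = bS6 0 - bS6 4 := by
        show eS 0 + eS 3 - eS 7 = eS 3 - (eS 7 - eS 0); abel
      exact Set.mem_of_eq_of_mem e (sub_mem (hb 0) (hb 4))
    · have e : vS 5 = bS6 5 - bS6 1 := by
        show eS 8 - eS 4 - eS 2 = (eS 8 - eS 2) - eS 4; abel
      exact Set.mem_of_eq_of_mem e (sub_mem (hb 5) (hb 1))
    · have e : vS 6 = bS6 1 - bS6 5 := by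
        show eS 4 + eS 2 - eS 8 = eS 4 - (eS 8 - eS 2); abel
      exact Set.mem_of_eq_of_mem e (sub_mem (hb 1) (hb 5))
    · have e : vS 9 = bS6 2 - bS6 4 := by
        show eS 0 + eS 9 - eS 7 = eS 9 - (eS 7 - eS 0); abel
      exact Set.mem_of_eq_of_mem e (sub_mem (hb 2) (hb 4))
    · have e : vS 10 = bS6 3 - bS6 5 := by
        show eS 2 + eS 10 - eS 8 = eS 10 - (eS 8 - eS 2); abel
      exact Set.mem_of_eq_of_mem e (sub_mem (hb 3) (hb 5))
    · exact neg_mem (hb 2)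
    · exact neg_mem (hb 3)
  · rw [Submodule.span_le]
    rintro x ⟨j, rfl⟩
    have hv : ∀ i, vS i ∈
        ({vS 0, vS 1, vS 2, vS 3, vS 4, vS 5, vS 6, vS 9, vS 10, vS 11, vS 12} :
          Set (Fin 11 → ℝ)) → vS i ∈ Submodule.span ℝ
        ({vS 0, vS 1, vS 2, vS 3, vS 4, vS 5, vS 6, vS 9, vS 10, vS 11, vS 12} :
          Set (Fin 11 → ℝ)) := fun i h => Submodule.subset_span h
    have m0 := hv 0 (by left; rfl)
    have m1 := hv 1 (by right; left; rfl)
    have m3 := hv 3 (by right; right; right; left; rfl)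
    have m5 := hv 5 (by right; right; right; right; right; left; rfl)
    have m11 := hv 11 (by right; right; right; right; right; right; right; right; right; left; rfl)
    have m12 := hv 12 (by
      right; right; right; right; right; right; right; right; right; right
      exact Set.mem_singleton _)
    fin_cases j
    · exact m0
    · have e : bS6 1 = vS 0 + vS 1 := by show eS 4 = eS 3 + (eS 4 - eS 3); abel
      exact Set.mem_of_eq_of_mem e (add_mem m0 m1)
    · have e : bS6 2 = -vS 11 := by show eS 9 = -(-eS 9); abel
      exact Set.mem_of_eq_of_mem e (neg_mem m11)
    · have e : bS6 3 = -vS 12 := by show eS 10 = -(-eS 10); abel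
      exact Set.mem_of_eq_of_mem e (neg_mem m12)
    · have e : bS6 4 = vS 0 + vS 3 := by
        show eS 7 - eS 0 = eS 3 + (eS 7 - eS 0 - eS 3); abel
      exact Set.mem_of_eq_of_mem e (add_mem m0 m3)
    · have e : bS6 5 = vS 0 + vS 1 + vS 5 := by
        show eS 8 - eS 2 = eS 3 + (eS 4 - eS 3) + (eS 8 - eS 4 - eS 2); abel
      exact Set.mem_of_eq_of_mem e (add_mem (add_mem m0 m1) m5)

lemma span_pair_neg_finrank {v w : Fin 11 → ℝ} (hw : w = -v) (hv : v ≠ 0) :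
    Module.finrank ℝ (Submodule.span ℝ ({v, w} : Set (Fin 11 → ℝ))) = 1 := by
  have h : Submodule.span ℝ ({v, w} : Set (Fin 11 → ℝ)) =
      Submodule.span ℝ ({v} : Set (Fin 11 → ℝ)) := by
    apply le_antisymm
    · rw [Submodule.span_le]
      rintro x (rfl|rfl)
      · exact Submodule.mem_span_singleton_self _
      · rw [hw]; exact neg_mem (Submodule.mem_span_singleton_self _)
    · exact Submodule.span_mono (by simp)
  rw [h, finrank_span_singleton hv]

/-- the finest independent decomposition of the Schmitz network.
(i) the span of all 17 reaction vectors has dimension 9; (ii) the span of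
`{v_1,…,v_7, v_10,…,v_13}` has dimension 6; (iii) the spans of `{v_8, v_9}`,
`{v_14, v_15}`, `{v_16, v_17}` each have dimension 1; and `9 = 6 + 1 + 1 + 1`,
so the partition into these four reaction sets is an independent decomposition. -/
theorem schmitz_finest_independent_decomposition :
    Module.finrank ℝ (Submodule.span ℝ (Set.range vS)) = 9 ∧
    Module.finrank ℝ (Submodule.span ℝ
      ({vS 0, vS 1, vS 2, vS 3, vS 4, vS 5, vS 6, vS 9, vS 10, vS 11, vS 12} :
        Set (Fin 11 → ℝ))) = 6 ∧
    Module.finrank ℝ (Submodule.span ℝ ({vS 7, vS 8} : Set (Fin 11 → ℝ))) = 1 ∧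
    Module.finrank ℝ (Submodule.span ℝ ({vS 13, vS 14} : Set (Fin 11 → ℝ))) = 1 ∧
    Module.finrank ℝ (Submodule.span ℝ ({vS 15, vS 16} : Set (Fin 11 → ℝ))) = 1 ∧
    9 = 6 + 1 + 1 + 1 := by
  refine ⟨?_, ?_, ?_, ?_, ?_, rfl⟩
  · rw [span_all_eq, finrank_span_eq_card bS9_li]
    rfl
  · rw [span_sub1_eq, finrank_span_eq_card bS6_li]
    rfl
  · refine span_pair_neg_finrank ?_ ?_
    · show eS 5 + eS 4 - eS 6 = -(eS 6 - eS 5 - eS 4); abel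
    · have h1 : vS 7 6 = 1 := by show (eS 6 - eS 5 - eS 4) 6 = 1; simp [eS, Pi.single_apply]
      intro h; rw [h] at h1; simp at h1
  · refine span_pair_neg_finrank ?_ ?_
    · show eS 0 - eS 1 = -(eS 1 - eS 0); abel
    · have h1 : vS 13 1 = 1 := by show (eS 1 - eS 0) 1 = 1; simp [eS, Pi.single_apply]
      intro h; rw [h] at h1; simp at h1
  · refine span_pair_neg_finrank ?_ ?_
    · show eS 0 - eS 2 = -(eS 2 - eS 0); abel
    · have h1 : vS 15 2 = 1 := by show (eS 2 - eS 0) 2 = 1; simp [eS, Pi.single_apply]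
      intro h; rw [h] at h1; simp at h1
end

section
/- In ℝ^15 with coordinates indexed by the species A_1, A_2, A_4, A_6, A_7, A_8, A_10, A_12, A_13, A_23, A_24, A_25, A_26, A_27, A_28 (write e_i for the basis vector of species A_i), consider the 23 reaction vectors of the Feinberg augmented Lee network: R1: e_4; R4: e_8 - e_1 - e_4; R5: e_1 + e_4 - e_8; R12: -e_10; R14: e_2 - e_1; R15: e_1 - e_2; R18: e_13 - e_12; R19: e_12 - e_13; R38: -e_4; R43: e_23 - e_24 - e_26; R44: e_24 + e_26 - e_23; R45: e_25 - e_8; R46: e_1 + e_10 - e_25; R47: e_26; R48: -e_26; R49: e_7 - e_4 - e_6; R50: e_4 + e_6 - e_7; R51: e_27 - e_24 - e_4; R52: e_24 + e_4 - e_27; R53: e_28 - e_13 - e_2; R54: e_23 - e_2; R55: e_2 - e_23; R56: e_13 + e_23 - e_28. Then the span of all 23 vectors has dimension 12, and the spans of the reaction-vector sets {R1, R4, R5, R12, R38, R45, R46}, {R14, R15}, {R18, R19}, {R43, R44}, {R47, R48}, {R49, R50}, {R51, R52}, {R53, R54, R55, R56} have dimensions 4, 1, 1, 1, 1, 1, 1,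 2 respectively, so 12 = 4 + 1 + 1 + 1 + 1 + 1 + 1 + 2 and the partition is an independent decomposition. -/
/-- standard basis vector of `ℝ^15`, coordinates indexed by the FAL species
`A_1, A_2, A_4, A_6, A_7, A_8, A_10, A_12, A_13, A_23, A_24, A_25, A_26, A_27, A_28`
(in this order). -/
noncomputable def eF (i : Fin 15) : Fin 15 → ℝ := Pi.single i 1

/-- the 23 reaction vectors of the Feinberg augmented Lee network `N_F`, in the order
`R1, R4, R5, R12, R14, R15, R18, R19, R38, R43, R44, R45, R46, R47, R48, R49, R50,
R51, R52, R53, R54, R55, R56`. -/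
noncomputable def vF : Fin 23 → (Fin 15 → ℝ) :=
  ![eF 2,                      -- R1 : e_{A4}
    eF 5 - eF 0 - eF 2,        -- R4
    eF 0 + eF 2 - eF 5,        -- R5
    -eF 6,                     -- R12
    eF 1 - eF 0,               -- R14
    eF 0 - eF 1,               -- R15
    eF 8 - eF 7,               -- R18
    eF 7 - eF 8,               -- R19
    -eF 2,                     -- R38
    eF 9 - eF 10 - eF 12,      -- R43
    eF 10 + eF 12 - eF 9,      -- R44
    eF 11 - eF 5,              -- R45
    eF 0 + eF 6 - eF 11,       -- R46
    eF 12,                     -- R47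
    -eF 12,                    -- R48
    eF 4 - eF 2 - eF 3,        -- R49
    eF 2 + eF 3 - eF 4,        -- R50
    eF 13 - eF 10 - eF 2,      -- R51
    eF 10 + eF 2 - eF 13,      -- R52
    eF 14 - eF 8 - eF 1,       -- R53
    eF 9 - eF 1,               -- R54
    eF 1 - eF 9,               -- R55
    eF 8 + eF 9 - eF 14]       -- R56

noncomputable def bvF : Fin 12 → (Fin 15 → ℝ) :=
  ![eF 2, -eF 6, eF 12, eF 1 - eF 0, eF 5 - eF 0 - eF 2, eF 11 - eF 5,
    eF 8 - eF 7, eF 9 - eF 10 - eF 12, eF 4 - eF 2 - eF 3, eF 13 - eF 10 - eF 2,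
    eF 14 - eF 8 - eF 1, eF 9 - eF 1]

lemma memEq {S : Submodule ℝ (Fin 15 → ℝ)} {x y : Fin 15 → ℝ} (hx : x ∈ S) (h : y = x) :
    y ∈ S := h ▸ hx

lemma bvF_li : LinearIndependent ℝ bvF := by
  rw [Fintype.linearIndependent_iff]
  intro g hg
  have h0 := congrFun hg 0
  have h1 := congrFun hg 1
  have h2 := congrFun hg 2
  have h3 := congrFun hg 3
  have h4 := congrFun hg 4
  have h5 := congrFun hg 5
  have h6 := congrFun hg 6
  have h7 := congrFun hg 7
  have h8 := congrFun hg 8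
  have h9 := congrFun hg 9
  have h10 := congrFun hg 10
  have h11 := congrFun hg 11
  have h12 := congrFun hg 12
  have h13 := congrFun hg 13
  have h14 := congrFun hg 14
  simp (config := { decide := true }) [bvF, eF, Fin.sum_univ_succ, Pi.single_apply]
    at h0 h1 h2 h3 h4 h5 h6 h7 h8 h9 h10 h11 h12 h13 h14
  try simp only [show Fin.succ (0:Fin 1) = (1:Fin 2) from by decide, show Fin.succ (0:Fin 2) = (1:Fin 3) from by decide, show Fin.succ (1:Fin 2) = (2:Fin 3) from by decide, show Fin.succ (0:Fin 3) = (1:Fin 4) from by decide, show Fin.succ (1:Fin 3) = (2:Fin 4) from by decide, show Fin.succ (2:Fin 3) = (3:Fin 4) from by decide, show Fin.succ (0:Fin 4) = (1:Fin 5) from by decide, show Fin.succ (1:Fin 4) = (2:Fin 5) from by decide, show Fin.succ (2:Fin 4) = (3:Fin 5) from by decide, show Fin.succ (3:Fin 4) = (4:Fin 5) from by decide, show Fin.succ (0:Fin 5) = (1:Fin 6) from by decide, show Fin.succ (1:Fin 5) = (2:Fin 6) from by decide, show Fin.succ (2:Fin 5) = (3:Fin 6) from by decide, show Fin.succ (3:Fin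 5) = (4:Fin 6) from by decide, show Fin.succ (4:Fin 5) = (5:Fin 6) from by decide, show Fin.succ (0:Fin 6) = (1:Fin 7) from by decide, show Fin.succ (1:Fin 6) = (2:Fin 7) from by decide, show Fin.succ (2:Fin 6) = (3:Fin 7) from by decide, show Fin.succ (3:Fin 6) = (4:Fin 7) from by decide, show Fin.succ (4:Fin 6) = (5:Fin 7) from by decide, show Fin.succ (5:Fin 6) = (6:Fin 7) from by decide, show Fin.succ (0:Fin 7) = (1:Fin 8) from by decide, show Fin.succ (1:Fin 7) = (2:Fin 8) from by decide, show Fin.succ (2:Fin 7) = (3:Fin 8) from by decide, show Fin.succ (3:Fin 7) = (4:Fin 8) from by decide, show Fin.succ (4:Fin 7) = (5:Fin 8) from by decide, show Fin.succ (5:Fin 7) = (6:Fin 8) from by decide, show Fin.succ (6:Fin 7) = (7:Fin 8) from by decide, show Fin.succ (0:Fin 8) = (1:Fin 9) from by decide, show Fin.succ (1:Fin 8) = (2:Fin 9) from by decide, show Fin.succ (2:Fin 8) = (3:Fin 9) from by decide, show Fin.succ (3:Fin 8) = (4:Fin 9) from by decide, show Fin.succ (4:Fin 8) = (5:Fin 9)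 from by decide, show Fin.succ (5:Fin 8) = (6:Fin 9) from by decide, show Fin.succ (6:Fin 8) = (7:Fin 9) from by decide, show Fin.succ (7:Fin 8) = (8:Fin 9) from by decide, show Fin.succ (0:Fin 9) = (1:Fin 10) from by decide, show Fin.succ (1:Fin 9) = (2:Fin 10) from by decide, show Fin.succ (2:Fin 9) = (3:Fin 10) from by decide, show Fin.succ (3:Fin 9) = (4:Fin 10) from by decide, show Fin.succ (4:Fin 9) = (5:Fin 10) from by decide, show Fin.succ (5:Fin 9) = (6:Fin 10) from by decide, show Fin.succ (6:Fin 9) = (7:Fin 10) from by decide, show Fin.succ (7:Fin 9) = (8:Fin 10) from by decide, show Fin.succ (8:Fin 9) = (9:Fin 10) from by decide, show Fin.succ (0:Fin 10) = (1:Fin 11) from by decide, show Fin.succ (1:Fin 10) = (2:Fin 11) from by decide, show Fin.succ (2:Fin 10) = (3:Fin 11) from by decide, show Fin.succ (3:Fin 10) = (4:Fin 11) from by decide, show Fin.succ (4:Fin 10) = (5:Fin 11) from by decide, show Fin.succ (5:Fin 10) = (6:Fin 11) from by decide, show Fin.succ (6:Fin 10) = (7:Fin 11) from by decide, show Fin.succ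 (7:Fin 10) = (8:Fin 11) from by decide, show Fin.succ (8:Fin 10) = (9:Fin 11) from by decide, show Fin.succ (9:Fin 10) = (10:Fin 11) from by decide, show Fin.succ (0:Fin 11) = (1:Fin 12) from by decide, show Fin.succ (1:Fin 11) = (2:Fin 12) from by decide, show Fin.succ (2:Fin 11) = (3:Fin 12) from by decide, show Fin.succ (3:Fin 11) = (4:Fin 12) from by decide, show Fin.succ (4:Fin 11) = (5:Fin 12) from by decide, show Fin.succ (5:Fin 11) = (6:Fin 12) from by decide, show Fin.succ (6:Fin 11) = (7:Fin 12) from by decide, show Fin.succ (7:Fin 11) = (8:Fin 12) from by decide, show Fin.succ (8:Fin 11) = (9:Fin 12) from by decide, show Fin.succ (9:Fin 11) = (10:Fin 12) from by decide, show Fin.succ (10:Fin 11) = (11:Fin 12) from by decide] at h0 h1 h2 h3 h4 h5 h6 h7 h8 h9 h10 h11 h12 h13 h14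
  intro i; fin_cases i <;> simp <;> linarith

lemma span_all : Submodule.span ℝ (Set.range vF) = Submodule.span ℝ (Set.range bvF) := by
  apply le_antisymm
  · rw [Submodule.span_le]
    rintro x ⟨i, rfl⟩
    set B := Submodule.span ℝ (Set.range bvF) with hB
    have m : ∀ j, bvF j ∈ B := fun j => Submodule.subset_span ⟨j, rfl⟩
    fin_cases i
    · exact m 0
    · exact m 4
    · exact memEq (B.neg_mem (m 4))
        (show eF 0 + eF 2 - eF 5 = -(eF 5 - eF 0 - eF 2) by module)
    · exact m 1
    · exact m 3
    · exact memEq (B.neg_mem (m 3)) (show eF 0 - eF 1 = -(eF 1 - eF 0) by module)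
    · exact m 6
    · exact memEq (B.neg_mem (m 6)) (show eF 7 - eF 8 = -(eF 8 - eF 7) by module)
    · exact memEq (B.neg_mem (m 0)) (show -eF 2 = -(eF 2) by module)
    · exact m 7
    · exact memEq (B.neg_mem (m 7))
        (show eF 10 + eF 12 - eF 9 = -(eF 9 - eF 10 - eF 12) by module)
    · exact m 5
    · exact memEq (B.sub_mem (B.sub_mem (B.sub_mem (B.neg_mem (m 0)) (m 4)) (m 1)) (m 5))
        (show eF 0 + eF 6 - eF 11
            = -(eF 2) - (eF 5 - eF 0 - eF 2) - (-eF 6) - (eF 11 - eF 5) by module)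
    · exact m 2
    · exact memEq (B.neg_mem (m 2)) (show -eF 12 = -(eF 12) by module)
    · exact m 8
    · exact memEq (B.neg_mem (m 8))
        (show eF 2 + eF 3 - eF 4 = -(eF 4 - eF 2 - eF 3) by module)
    · exact m 9
    · exact memEq (B.neg_mem (m 9))
        (show eF 10 + eF 2 - eF 13 = -(eF 13 - eF 10 - eF 2) by module)
    · exact m 10
    · exact m 11
    · exact memEq (B.neg_mem (m 11)) (show eF 1 - eF 9 = -(eF 9 - eF 1) by module)
    · exact memEq (B.add_mem (B.neg_mem (m 10)) (m 11))
        (show eF 8 + eF 9 - eF 14 = -(eF 14 - eF 8 - eF 1) + (eF 9 - eF 1) by module)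
  · rw [Submodule.span_le]
    rintro x ⟨j, rfl⟩
    fin_cases j
    · exact Submodule.subset_span ⟨0, rfl⟩
    · exact Submodule.subset_span ⟨3, rfl⟩
    · exact Submodule.subset_span ⟨13, rfl⟩
    · exact Submodule.subset_span ⟨4, rfl⟩
    · exact Submodule.subset_span ⟨1, rfl⟩
    · exact Submodule.subset_span ⟨11, rfl⟩
    · exact Submodule.subset_span ⟨6, rfl⟩
    · exact Submodule.subset_span ⟨9, rfl⟩
    · exact Submodule.subset_span ⟨15, rfl⟩
    · exact Submodule.subset_span ⟨17, rfl⟩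
    · exact Submodule.subset_span ⟨19, rfl⟩
    · exact Submodule.subset_span ⟨20, rfl⟩


noncomputable def cvF : Fin 4 → (Fin 15 → ℝ) :=
  ![eF 2, eF 5 - eF 0 - eF 2, -eF 6, eF 11 - eF 5]

lemma cvF_li : LinearIndependent ℝ cvF := by
  rw [Fintype.linearIndependent_iff]
  intro g hg
  have h0 := congrFun hg 0
  have h2 := congrFun hg 2
  have h5 := congrFun hg 5
  have h6 := congrFun hg 6
  have h11 := congrFun hg 11
  simp (config := { decide := true }) [cvF, eF, Fin.sum_univ_succ, Pi.single_apply]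
    at h0 h2 h5 h6 h11
  try simp only [show Fin.succ (0:Fin 1) = (1:Fin 2) from by decide, show Fin.succ (0:Fin 2) = (1:Fin 3) from by decide, show Fin.succ (1:Fin 2) = (2:Fin 3) from by decide, show Fin.succ (0:Fin 3) = (1:Fin 4) from by decide, show Fin.succ (1:Fin 3) = (2:Fin 4) from by decide, show Fin.succ (2:Fin 3) = (3:Fin 4) from by decide] at h0 h2 h5 h6 h11
  intro i; fin_cases i <;> simp <;> linarith

noncomputable def dvF : Fin 2 → (Fin 15 → ℝ) :=
  ![eF 14 - eF 8 - eF 1, eF 9 - eF 1]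

lemma dvF_li : LinearIndependent ℝ dvF := by
  rw [Fintype.linearIndependent_iff]
  intro g hg
  have h14 := congrFun hg 14
  have h9 := congrFun hg 9
  simp (config := { decide := true }) [dvF, eF, Fin.sum_univ_succ, Pi.single_apply]
    at h14 h9
  try simp only [show Fin.succ (0:Fin 1) = (1:Fin 2) from by decide] at h14 h9
  intro i; fin_cases i <;> simp <;> linarith

lemma span_part1 :
    Submodule.span ℝ ({vF 0, vF 1, vF 2, vF 3, vF 8, vF 11, vF 12} : Set (Fin 15 → ℝ))
      = Submodule.span ℝ (Set.range cvF) := by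
  apply le_antisymm
  · rw [Submodule.span_le]
    intro x hx
    set C := Submodule.span ℝ (Set.range cvF) with hC
    have m : ∀ j, cvF j ∈ C := fun j => Submodule.subset_span ⟨j, rfl⟩
    simp only [Set.mem_insert_iff, Set.mem_singleton_iff] at hx
    rcases hx with rfl | rfl | rfl | rfl | rfl | rfl | rfl
    · exact m 0
    · exact m 1
    · exact memEq (C.neg_mem (m 1))
        (show eF 0 + eF 2 - eF 5 = -(eF 5 - eF 0 - eF 2) by module)
    · exact m 2
    · exact C.neg_mem (m 0)
    · exact m 3
    · exact memEq (C.sub_mem (C.sub_mem (C.sub_mem (C.neg_mem (m 0)) (m 1)) (m 2)) (m 3))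
        (show eF 0 + eF 6 - eF 11
            = -(eF 2) - (eF 5 - eF 0 - eF 2) - (-eF 6) - (eF 11 - eF 5) by module)
  · rw [Submodule.span_le]
    rintro x ⟨j, rfl⟩
    fin_cases j
    · exact Submodule.subset_span (Or.inl rfl)
    · exact Submodule.subset_span (Or.inr (Or.inl rfl))
    · exact Submodule.subset_span (Or.inr (Or.inr (Or.inr (Or.inl rfl))))
    · exact Submodule.subset_span
        (Or.inr (Or.inr (Or.inr (Or.inr (Or.inr (Or.inl rfl))))))

lemma span_part8 :
    Submodule.span ℝ ({vF 19, vF 20, vF 21, vF 22} : Set (Fin 15 → ℝ))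
      = Submodule.span ℝ (Set.range dvF) := by
  apply le_antisymm
  · rw [Submodule.span_le]
    intro x hx
    set D := Submodule.span ℝ (Set.range dvF) with hD
    have m : ∀ j, dvF j ∈ D := fun j => Submodule.subset_span ⟨j, rfl⟩
    simp only [Set.mem_insert_iff, Set.mem_singleton_iff] at hx
    rcases hx with rfl | rfl | rfl | rfl
    · exact m 0
    · exact m 1
    · exact memEq (D.neg_mem (m 1)) (show eF 1 - eF 9 = -(eF 9 - eF 1) by module)
    · exact memEq (D.add_mem (D.neg_mem (m 0)) (m 1))
        (show eF 8 + eF 9 - eF 14 = -(eF 14 - eF 8 - eF 1) + (eF 9 - eF 1) by module)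
  · rw [Submodule.span_le]
    rintro x ⟨j, rfl⟩
    fin_cases j
    · exact Submodule.subset_span (Or.inl rfl)
    · exact Submodule.subset_span (Or.inr (Or.inl rfl))

lemma finrank_pair_neg {v w : Fin 15 → ℝ} (h : w = -v) (hv : v ≠ 0) :
    Module.finrank ℝ (Submodule.span ℝ ({v, w} : Set (Fin 15 → ℝ))) = 1 := by
  subst h
  have hs : Submodule.span ℝ ({v, -v} : Set (Fin 15 → ℝ)) = Submodule.span ℝ {v} := by
    apply le_antisymm
    · rw [Submodule.span_le]
      intro x hx
      simp only [Set.mem_insert_iff, Set.mem_singleton_iff] at hx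
      rcases hx with rfl | rfl
      · exact Submodule.subset_span rfl
      · exact Submodule.neg_mem _ (Submodule.subset_span rfl)
    · exact Submodule.span_mono (by simp)
  rw [hs, finrank_span_singleton hv]

lemma nz_of_coord {x : Fin 15 → ℝ} (k : Fin 15) (hk : x k ≠ 0) : x ≠ 0 :=
  fun h => hk (by rw [h]; rfl)

/-- the finest independent decomposition of the FAL network.
The span of all 23 reaction vectors has dimension 12, and the spans of the parts
`{R1,R4,R5,R12,R38,R45,R46}`, `{R14,R15}`, `{R18,R19}`, `{R43,R44}`, `{R47,R48}`,
`{R49,R50}`, `{R51,R52}`, `{R53,R54,R55,R56}` have dimensions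
`4, 1, 1, 1, 1, 1, 1, 2`; moreover `12 = 4+1+1+1+1+1+1+2`, so the partition is an
independent decomposition. -/
theorem FAL_finest_independent_decomposition :
    Module.finrank ℝ (Submodule.span ℝ (Set.range vF)) = 12 ∧
    Module.finrank ℝ (Submodule.span ℝ
      ({vF 0, vF 1, vF 2, vF 3, vF 8, vF 11, vF 12} : Set (Fin 15 → ℝ))) = 4 ∧
    Module.finrank ℝ (Submodule.span ℝ ({vF 4, vF 5} : Set (Fin 15 → ℝ))) = 1 ∧
    Module.finrank ℝ (Submodule.span ℝ ({vF 6, vF 7} : Set (Fin 15 → ℝ))) = 1 ∧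
    Module.finrank ℝ (Submodule.span ℝ ({vF 9, vF 10} : Set (Fin 15 → ℝ))) = 1 ∧
    Module.finrank ℝ (Submodule.span ℝ ({vF 13, vF 14} : Set (Fin 15 → ℝ))) = 1 ∧
    Module.finrank ℝ (Submodule.span ℝ ({vF 15, vF 16} : Set (Fin 15 → ℝ))) = 1 ∧
    Module.finrank ℝ (Submodule.span ℝ ({vF 17, vF 18} : Set (Fin 15 → ℝ))) = 1 ∧
    Module.finrank ℝ (Submodule.span ℝ
      ({vF 19, vF 20, vF 21, vF 22} : Set (Fin 15 → ℝ))) = 2 ∧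
    12 = 4 + 1 + 1 + 1 + 1 + 1 + 1 + 2 := by
  refine ⟨?_, ?_, ?_, ?_, ?_, ?_, ?_, ?_, ?_, rfl⟩
  · rw [span_all, finrank_span_eq_card bvF_li, Fintype.card_fin]
  · rw [span_part1, finrank_span_eq_card cvF_li, Fintype.card_fin]
  · exact finrank_pair_neg (show vF 5 = -vF 4 by
        show eF 0 - eF 1 = -(eF 1 - eF 0); module)
      (nz_of_coord 1 (show (eF 1 - eF 0 : Fin 15 → ℝ) 1 ≠ 0 by
        simp (config := { decide := true }) [eF, Pi.single_apply]))
  · exact finrank_pair_neg (show vF 7 = -vF 6 by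
        show eF 7 - eF 8 = -(eF 8 - eF 7); module)
      (nz_of_coord 8 (show (eF 8 - eF 7 : Fin 15 → ℝ) 8 ≠ 0 by
        simp (config := { decide := true }) [eF, Pi.single_apply]))
  · exact finrank_pair_neg (show vF 10 = -vF 9 by
        show eF 10 + eF 12 - eF 9 = -(eF 9 - eF 10 - eF 12); module)
      (nz_of_coord 9 (show (eF 9 - eF 10 - eF 12 : Fin 15 → ℝ) 9 ≠ 0 by
        simp (config := { decide := true }) [eF, Pi.single_apply]))
  · exact finrank_pair_neg (show vF 14 = -vF 13 by
        show -eF 12 = -(eF 12); module)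
      (nz_of_coord 12 (show (eF 12 : Fin 15 → ℝ) 12 ≠ 0 by
        simp (config := { decide := true }) [eF, Pi.single_apply]))
  · exact finrank_pair_neg (show vF 16 = -vF 15 by
        show eF 2 + eF 3 - eF 4 = -(eF 4 - eF 2 - eF 3); module)
      (nz_of_coord 4 (show (eF 4 - eF 2 - eF 3 : Fin 15 → ℝ) 4 ≠ 0 by
        simp (config := { decide := true }) [eF, Pi.single_apply]))
  · exact finrank_pair_neg (show vF 18 = -vF 17 by
        show eF 10 + eF 2 - eF 13 = -(eF 13 - eF 10 - eF 2); module)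
      (nz_of_coord 13 (show (eF 13 - eF 10 - eF 2 : Fin 15 → ℝ) 13 ≠ 0 by
        simp (config := { decide := true }) [eF, Pi.single_apply]))
  · rw [span_part8, finrank_span_eq_card dvF_li, Fintype.card_fin]
end

section
/- Let k_1, ..., k_17 and σ_1, τ_2 be positive reals, set σ_2 = k_16·k_6·k_11·(k_5 + k_10)·σ_1 / (k_17·k_4·k_10·(k_7 + k_11)) and D = k_2·σ_2 + k_3·σ_1 + σ_1·σ_2, and define a_1 = σ_1(k_5 + k_10)/(k_4 k_10), a_2 = k_14·σ_1(k_5 + k_10)/(k_4 k_10 k_15), a_3 = σ_2(k_7 + k_11)/(k_6 k_11), a_4 = k_1(k_3 + σ_2)/D, a_5 = k_1 k_2 / D, a_6 = τ_2, a_7 = k_1 k_2 k_8 τ_2/(k_9 D), a_8 = k_1 σ_1 (k_3 + σ_2)/(k_10 D), a_9 = k_1 k_2 σ_2/(k_11 D), a_10 = k_1 σ_1 (k_3 + σ_2)/(k_12 D), a_11 = k_1 k_2 σ_2/(k_13 D). Then all eleven of the following expressions vanish: -k_4 a_1 a_4 + (k_5 + k_10) a_8 - k_14 a_1 + k_15 a_2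 - k_16 a_1 + k_17 a_3; k_14 a_1 - k_15 a_2; -k_6 a_5 a_3 + (k_7 + k_11) a_9 + k_16 a_1 - k_17 a_3; k_1 - k_2 a_4 + k_3 a_5 - k_4 a_1 a_4 + k_5 a_8; k_2 a_4 - k_3 a_5 - k_6 a_5 a_3 + k_7 a_9 - k_8 a_6 a_5 + k_9 a_7; -k_8 a_6 a_5 + k_9 a_7; k_8 a_6 a_5 - k_9 a_7; k_4 a_1 a_4 - (k_5 + k_10) a_8; k_6 a_5 a_3 - (k_7 + k_11) a_9; k_10 a_8 - k_12 a_10; k_11 a_9 - k_13 a_11. Moreover all a_i are positive. -/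
/-- the two-parameter family `(σ_1, τ_2)` is a parametrization of
positive equilibria of the Schmitz mass action system: the eleven mass action
ODE right-hand sides all vanish at the given point, and all coordinates are
positive. -/
theorem schmitz_equilibria_parametrization
    (k1 k2 k3 k4 k5 k6 k7 k8 k9 k10 k11 k12 k13 k14 k15 k16 k17 σ1 τ2 : ℝ)
    (hk1 : 0 < k1) (hk2 : 0 < k2) (hk3 : 0 < k3) (hk4 : 0 < k4) (hk5 : 0 < k5)
    (hk6 : 0 < k6) (hk7 : 0 < k7) (hk8 : 0 < k8) (hk9 : 0 < k9) (hk10 : 0 < k10)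
    (hk11 : 0 < k11) (hk12 : 0 < k12) (hk13 : 0 < k13) (hk14 : 0 < k14)
    (hk15 : 0 < k15) (hk16 : 0 < k16) (hk17 : 0 < k17)
    (hσ1 : 0 < σ1) (hτ2 : 0 < τ2)
    (σ2 D a1 a2 a3 a4 a5 a6 a7 a8 a9 a10 a11 : ℝ)
    (hσ2 : σ2 = k16 * k6 * k11 * (k5 + k10) * σ1 / (k17 * k4 * k10 * (k7 + k11)))
    (hD : D = k2 * σ2 + k3 * σ1 + σ1 * σ2)
    (ha1 : a1 = σ1 * (k5 + k10) / (k4 * k10))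
    (ha2 : a2 = k14 * σ1 * (k5 + k10) / (k4 * k10 * k15))
    (ha3 : a3 = σ2 * (k7 + k11) / (k6 * k11))
    (ha4 : a4 = k1 * (k3 + σ2) / D)
    (ha5 : a5 = k1 * k2 / D)
    (ha6 : a6 = τ2)
    (ha7 : a7 = k1 * k2 * k8 * τ2 / (k9 * D))
    (ha8 : a8 = k1 * σ1 * (k3 + σ2) / (k10 * D))
    (ha9 : a9 = k1 * k2 * σ2 / (k11 * D))
    (ha10 : a10 = k1 * σ1 * (k3 + σ2) / (k12 * D))
    (ha11 : a11 = k1 * k2 * σ2 / (k13 * D)) :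
    (-(k4 * a1 * a4) + (k5 + k10) * a8 - k14 * a1 + k15 * a2 - k16 * a1 + k17 * a3 = 0) ∧
    (k14 * a1 - k15 * a2 = 0) ∧
    (-(k6 * a5 * a3) + (k7 + k11) * a9 + k16 * a1 - k17 * a3 = 0) ∧
    (k1 - k2 * a4 + k3 * a5 - k4 * a1 * a4 + k5 * a8 = 0) ∧
    (k2 * a4 - k3 * a5 - k6 * a5 * a3 + k7 * a9 - k8 * a6 * a5 + k9 * a7 = 0) ∧
    (-(k8 * a6 * a5) + k9 * a7 = 0) ∧
    (k8 * a6 * a5 - k9 * a7 = 0) ∧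
    (k4 * a1 * a4 - (k5 + k10) * a8 = 0) ∧
    (k6 * a5 * a3 - (k7 + k11) * a9 = 0) ∧
    (k10 * a8 - k12 * a10 = 0) ∧
    (k11 * a9 - k13 * a11 = 0) ∧
    0 < a1 ∧ 0 < a2 ∧ 0 < a3 ∧ 0 < a4 ∧ 0 < a5 ∧ 0 < a6 ∧ 0 < a7 ∧ 0 < a8 ∧
    0 < a9 ∧ 0 < a10 ∧ 0 < a11 := by
  have hk511 : 0 < k5 + k10 := by positivity
  have hk711 : 0 < k7 + k11 := by positivity
  have hσ2p : 0 < σ2 := by rw [hσ2]; positivity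
  have hDp : 0 < D := by rw [hD]; positivity
  have hDne : D ≠ 0 := ne_of_gt hDp
  have hDpne : k2 * σ2 + k3 * σ1 + σ1 * σ2 ≠ 0 := by rw [← hD]; exact hDne
  have h4ne := hk4.ne'
  have h6ne := hk6.ne'
  have h7ne := hk7.ne'
  have h9ne := hk9.ne'
  have h10ne := hk10.ne'
  have h11ne := hk11.ne'
  have h12ne := hk12.ne'
  have h13ne := hk13.ne'
  have h15ne := hk15.ne'
  have h17ne := hk17.ne'
  have h511ne := hk511.ne'
  have h711ne := hk711.ne'
  have h2e : k14 * a1 = k15 * a2 := by rw [ha1, ha2]; field_simp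
  have h13e : k16 * a1 = k17 * a3 := by
    rw [ha1, ha3, hσ2]; field_simp
  have h8e : k4 * a1 * a4 = (k5 + k10) * a8 := by
    rw [ha1, ha4, ha8]; field_simp
  have h9e : k6 * a5 * a3 = (k7 + k11) * a9 := by
    rw [ha3, ha5, ha9]; field_simp
  have h6e : k8 * a6 * a5 = k9 * a7 := by
    rw [ha5, ha6, ha7]; field_simp
  have h10e : k10 * a8 = k12 * a10 := by rw [ha8, ha10]; field_simp
  have h11e : k11 * a9 = k13 * a11 := by rw [ha9, ha11]; field_simp
  have h4e : k1 = k2 * a4 - k3 * a5 + k10 * a8 := by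
    rw [ha4, ha5, ha8, hD]; field_simp; ring
  have h5e : k2 * a4 = k3 * a5 + k11 * a9 := by
    rw [ha4, ha5, ha9]; field_simp
  refine ⟨?_, ?_, ?_, ?_, ?_, ?_, ?_, ?_, ?_, ?_, ?_, ?_, ?_, ?_, ?_, ?_, ?_, ?_, ?_, ?_, ?_, ?_⟩
  · linear_combination -h8e - h2e - h13e
  · linear_combination h2e
  · linear_combination -h9e + h13e
  · linear_combination h4e - h8e
  · linear_combination h5e - h9e - h6e
  · linear_combination -h6e
  · linear_combination h6e
  · linear_combination h8e
  · linear_combination h9e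
  · linear_combination h10e
  · linear_combination h11e
  · rw [ha1]; positivity
  · rw [ha2]; positivity
  · rw [ha3]; positivity
  · rw [ha4]; positivity
  · rw [ha5]; positivity
  · rw [ha6]; positivity
  · rw [ha7]; positivity
  · rw [ha8]; positivity
  · rw [ha9]; positivity
  · rw [ha10]; positivity
  · rw [ha11]; positivity
end
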